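/- Let M > 0 and, for signs ±₁, ±₂ ∈ {+, −}, define the modulation function 𝔐_{±₁,±₂}(ξ, η) := | ⟨ξ − η⟩ ∓₁ ⟨ξ⟩_M ±₂ ⟨η⟩_M | for ξ, η ∈ ℝ³, where ⟨ζ⟩ := (1 + |ζ|²)^{1/2} and ⟨ζ⟩_M := (M² + |ζ|²)^{1/2}. Then there exists a constant c > 0, depending only on M, such that for all ξ, η ∈ ℝ³: (a) 𝔐_{−,+}(ξ, η) ≥ c (⟨ξ⟩ + ⟨η⟩); (b) if ξ ≠ 0 and η ≠ 0, then for both choices of sign ±, 𝔐_{±,±}(ξ, η) ≥ (c/⟨ξ − η⟩) · ( (|ξ| − |η|)²/(⟨ξ⟩⟨η⟩) + |ξ| |η| θ(ξ, η)² + 1 ); (c) if ξ ≠ 0 and ξ ≠ η, then 𝔐_{−,−}(ξ, η) ≥ c |ξ − η| |ξ| θ(ξ − η, −ξ)² / (⟨ξ⟩ + ⟨η⟩); and (d) if η ≠ 0 and ξ ≠ η, then 𝔐_{+,+}(ξ, η) ≥ c |ξ − η| |η| θ(ξ − η, η)² / (⟨ξ⟩ + ⟨η⟩). -/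
import Mathlib


open scoped RealInnerProductSpace

noncomputable section

abbrev Euc3 : Type := EuclideanSpace ℝ (Fin 3)

/-- `⟨ζ⟩_m = (m² + |ζ|²)^{1/2}`. -/
def hnorm (m : ℝ) (ζ : Euc3) : ℝ := Real.sqrt (m ^ 2 + ‖ζ‖ ^ 2)

/-- `⟨ζ⟩ = ⟨ζ⟩₁`. -/
def jap (ζ : Euc3) : ℝ := hnorm 1 ζ

/-- The modulation function `𝔐_{±₁,±₂}(ξ,η) = |⟨ξ−η⟩ ∓₁ ⟨ξ⟩_M ±₂ ⟨η⟩_M|`, where the sign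
`s₁ = 1` encodes `±₁ = +` (so that `∓₁` contributes `−s₁`) and `s₂ = 1` encodes `±₂ = +`. -/
def modFn (M s₁ s₂ : ℝ) (ξ η : Euc3) : ℝ :=
  |jap (ξ - η) - s₁ * hnorm M ξ + s₂ * hnorm M η|

namespace Stmt18Aux

/-- the constant -/
def cst (M : ℝ) : ℝ :=
  min (min (min 1 M) (M ^ 2 / (4 * (max 1 M) ^ 2))) (min (1 / 5) (2 / (5 * (1 + max 1 M))))

lemma cst_pos {M : ℝ} (hM : 0 < M) : 0 < cst M := by
  have h1 : (0:ℝ) < max 1 M := lt_of_lt_of_le one_pos (le_max_left _ _)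
  have : (0:ℝ) < 1 + max 1 M := by linarith
  unfold cst
  simp only [lt_min_iff]
  refine ⟨⟨⟨one_pos, hM⟩, by positivity⟩, by norm_num, by positivity⟩

lemma le_of_sq {x y : ℝ} (hx : 0 ≤ x) (hy : 0 ≤ y) (h : x ^ 2 ≤ y ^ 2) : x ≤ y := by
  nlinarith

lemma upper_of_sq {x s : ℝ} (hs : 0 ≤ s) (h : x ^ 2 ≤ s ^ 2) : x ≤ s := by
  nlinarith

lemma sum_bound {a b s : ℝ} (ha : 0 ≤ a) (hb : 0 ≤ b) (hs : 0 ≤ s)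
    (h : (s - b) ^ 2 ≤ a ^ 2) : s ≤ a + b := by
  nlinarith

lemma jordan {t : ℝ} (h0 : 0 ≤ t) (h1 : t ≤ Real.pi) : t ^ 2 / 5 ≤ 1 - Real.cos t := by
  have hpi : 0 < Real.pi := Real.pi_pos
  have hsin : 2 / Real.pi * (t / 2) ≤ Real.sin (t / 2) :=
    Real.mul_le_sin (by linarith) (by linarith)
  have hsq : Real.sin (t / 2) ^ 2 = 1 / 2 - Real.cos t / 2 := by
    have := Real.sin_sq_eq_half_sub (t / 2)
    rwa [show 2 * (t / 2) = t by ring] at this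
  have hs0 : 0 ≤ 2 / Real.pi * (t / 2) := by positivity
  have hsq2 : (2 / Real.pi * (t / 2)) ^ 2 ≤ Real.sin (t / 2) ^ 2 := by
    nlinarith
  have hval : (2 / Real.pi * (t / 2)) ^ 2 = t ^ 2 / Real.pi ^ 2 := by
    field_simp
  have hpi2 : Real.pi ^ 2 ≤ 10 := by nlinarith [Real.pi_lt_d2]
  have ht2 : t ^ 2 / 10 ≤ t ^ 2 / Real.pi ^ 2 := by
    apply div_le_div_of_nonneg_left (sq_nonneg t) (by positivity)
    exact hpi2
  rw [hval] at hsq2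
  nlinarith [hsq2, hsq, ht2]

/-- auxiliary inequality: with `u = P*Q`, `u² = (M²+a²)(M²+b²)`. -/
lemma W_aux (M a b u : ℝ) (hu : u ^ 2 = (M ^ 2 + a ^ 2) * (M ^ 2 + b ^ 2)) (hu0 : 0 ≤ u) :
    M ^ 2 * (2 * M ^ 2 + a ^ 2 + b ^ 2 + 2 * u)
      ≤ 2 * u * ((2 * M ^ 2 + a ^ 2 + b ^ 2 + 2 * u) - (a + b) ^ 2) := by
  nlinarith [hu, sq_nonneg (u - a * b), mul_nonneg (sq_nonneg M) hu0,
    sq_nonneg (M * a), sq_nonneg (M * b)]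

set_option maxHeartbeats 1000000 in
/-- Core real-variable estimate for part (b). -/
lemma core_b (M a b s th P Q J1 J2 S : ℝ)
    (hM : 0 < M)
    (ha : 0 ≤ a) (hb : 0 ≤ b) (hs : 0 ≤ s)
    (hP : P ^ 2 = M ^ 2 + a ^ 2) (hQ : Q ^ 2 = M ^ 2 + b ^ 2)
    (hJ1 : J1 ^ 2 = 1 + a ^ 2) (hJ2 : J2 ^ 2 = 1 + b ^ 2) (hSq : S ^ 2 = 1 + s ^ 2)
    (hP0 : 0 < P) (hQ0 : 0 < Q) (hJ10 : 0 < J1) (hJ20 : 0 < J2) (hS1 : 1 ≤ S)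
    (hth0 : 0 ≤ th) (hthpi : th ≤ Real.pi)
    (hlaw : s ^ 2 = a ^ 2 + b ^ 2 - 2 * (a * b * Real.cos th)) :
    0 ≤ S - P + Q ∧
    cst M / S * ((a - b) ^ 2 / (J1 * J2) + a * b * th ^ 2 + 1) ≤ S - P + Q := by
  set K : ℝ := max 1 M with hK
  have hK1 : 1 ≤ K := le_max_left _ _
  have hMK : M ≤ K := le_max_right _ _
  have hK0 : 0 < K := lt_of_lt_of_le one_pos hK1
  have hKne : K ≠ 0 := ne_of_gt hK0
  have hK2 : 1 ≤ K ^ 2 := by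
    have := mul_le_mul hK1 hK1 zero_le_one (by linarith : (0:ℝ) ≤ K)
    nlinarith [this]
  have hM2K : M ^ 2 ≤ K ^ 2 := by
    have := mul_self_le_mul_self (le_of_lt hM) hMK
    nlinarith [this]
  have hS0 : 0 < S := lt_of_lt_of_le one_pos hS1
  have hco1 : Real.cos th ≤ 1 := Real.cos_le_one th
  have hjord : th ^ 2 / 5 ≤ 1 - Real.cos th := jordan hth0 hthpi
  have hab : 0 ≤ a * b := mul_nonneg ha hb
  -- |a - b| ≤ s ≤ S
  have habs : (a - b) ^ 2 ≤ s ^ 2 := by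
    linarith [mul_nonneg hab (by linarith : (0:ℝ) ≤ 1 - Real.cos th), hlaw]
  have hsS : s ≤ S := le_of_sq hs (by linarith) (by linarith [hSq])
  have hbQ : b ≤ Q := le_of_sq hb (le_of_lt hQ0) (by linarith [hQ, sq_nonneg M])
  have haP : a ≤ P := le_of_sq ha (le_of_lt hP0) (by linarith [hP, sq_nonneg M])
  have hab2 : a - b ≤ s := upper_of_sq hs habs
  have hba2 : b - a ≤ s := upper_of_sq hs (by linarith [habs, (by ring : (b - a) ^ 2 = (a - b) ^ 2)])
  have hPle : P ≤ Q + s := by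
    have h1 : P ^ 2 ≤ (Q + s) ^ 2 := by
      have h2 := mul_self_le_mul_self ha (by linarith : a ≤ b + s)
      have h3 := mul_nonneg (sub_nonneg.2 hbQ) hs
      linarith [h2, h3, hP, hQ]
    exact le_of_sq (le_of_lt hP0) (by linarith) h1
  have hQle : Q ≤ P + s := by
    have h1 : Q ^ 2 ≤ (P + s) ^ 2 := by
      have h2 := mul_self_le_mul_self hb (by linarith : b ≤ a + s)
      have h3 := mul_nonneg (sub_nonneg.2 haP) hs
      linarith [h2, h3, hP, hQ]
    exact le_of_sq (le_of_lt hQ0) (by linarith) h1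
  have hB0 : 0 ≤ s - P + Q := by linarith
  have hC2S : s + P - Q ≤ 2 * S := by linarith
  -- bounds P ≤ K * J1, Q ≤ K * J2
  have hPK : P ≤ K * J1 := by
    apply le_of_sq (le_of_lt hP0) (by positivity)
    have h1 : (K * J1) ^ 2 = K ^ 2 * (1 + a ^ 2) := by rw [mul_pow, hJ1]
    have h2 := mul_le_mul_of_nonneg_right hK2 (sq_nonneg a)
    linarith [h1, h2, hM2K, hP]
  have hQK : Q ≤ K * J2 := by
    apply le_of_sq (le_of_lt hQ0) (by positivity)
    have h1 : (K * J2) ^ 2 = K ^ 2 * (1 + b ^ 2) := by rw [mul_pow, hJ2]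
    have h2 := mul_le_mul_of_nonneg_right hK2 (sq_nonneg b)
    linarith [h1, h2, hM2K, hQ]
  have hPQ0 : 0 < P * Q := mul_pos hP0 hQ0
  have hPQK : P * Q ≤ K ^ 2 * (J1 * J2) := by
    have := mul_le_mul hPK hQK (le_of_lt hQ0) (by positivity)
    linarith [this]
  -- key W inequality
  have hu : (P * Q) ^ 2 = (M ^ 2 + a ^ 2) * (M ^ 2 + b ^ 2) := by rw [mul_pow, hP, hQ]
  have hsum : (P + Q) ^ 2 = 2 * M ^ 2 + a ^ 2 + b ^ 2 + 2 * (P * Q) := by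
    linear_combination hP + hQ
  have W : M ^ 2 * (P + Q) ^ 2 ≤ 2 * (P * Q) * ((P + Q) ^ 2 - (a + b) ^ 2) := by
    rw [hsum]
    exact W_aux M a b (P * Q) hu (le_of_lt hPQ0)
  have hid2 : 2 * (P * Q) * ((P - Q) ^ 2 * (P + Q) ^ 2)
      = 2 * (P * Q) * ((a - b) ^ 2 * (a + b) ^ 2) := by
    have h1 : (P - Q) ^ 2 * (P + Q) ^ 2 = (a - b) ^ 2 * (a + b) ^ 2 := by
      have h2 : (P ^ 2 - Q ^ 2) ^ 2 = (a ^ 2 - b ^ 2) ^ 2 := by rw [hP, hQ]; ring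
      calc (P - Q) ^ 2 * (P + Q) ^ 2 = (P ^ 2 - Q ^ 2) ^ 2 := by ring
        _ = (a ^ 2 - b ^ 2) ^ 2 := h2
        _ = (a - b) ^ 2 * (a + b) ^ 2 := by ring
    rw [h1]
  have hPQsum : (0:ℝ) < (P + Q) ^ 2 := by positivity
  have H2 : (P + Q) ^ 2 * (M ^ 2 * (a - b) ^ 2)
      ≤ (P + Q) ^ 2 * (((a - b) ^ 2 - (P - Q) ^ 2) * (2 * (P * Q))) := by
    linarith [mul_le_mul_of_nonneg_left W (sq_nonneg (a - b)), hid2]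
  have hKey1 : M ^ 2 * (a - b) ^ 2 ≤ ((a - b) ^ 2 - (P - Q) ^ 2) * (2 * (P * Q)) :=
    le_of_mul_le_mul_left H2 hPQsum
  have hD0 : 0 ≤ (a - b) ^ 2 - (P - Q) ^ 2 := by
    have h0 : (0:ℝ) ≤ (2 * (P * Q)) * ((a - b) ^ 2 - (P - Q) ^ 2) := by
      have := le_trans (by positivity : (0:ℝ) ≤ M ^ 2 * (a - b) ^ 2) hKey1
      linarith [this]
    exact nonneg_of_mul_nonneg_right h0 (by linarith)
  -- transfer to J1*J2 denominator
  have hgoal2 : M ^ 2 * (a - b) ^ 2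
      ≤ ((a - b) ^ 2 - (P - Q) ^ 2) * (2 * (K ^ 2 * (J1 * J2))) := by
    have h3 : ((a - b) ^ 2 - (P - Q) ^ 2) * (2 * (P * Q))
        ≤ ((a - b) ^ 2 - (P - Q) ^ 2) * (2 * (K ^ 2 * (J1 * J2))) := by
      apply mul_le_mul_of_nonneg_left _ hD0
      linarith [hPQK]
    linarith [hKey1, h3]
  have hJJ0 : 0 < J1 * J2 := mul_pos hJ10 hJ20
  have hKey2 : M ^ 2 / (2 * K ^ 2) * ((a - b) ^ 2 / (J1 * J2))
      ≤ (a - b) ^ 2 - (P - Q) ^ 2 := by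
    rw [div_mul_div_comm, div_le_iff₀ (by positivity)]
    linarith [hgoal2]
  -- assemble
  have e1 : (s - P + Q) * (s + P - Q)
      = ((a - b) ^ 2 - (P - Q) ^ 2) + 2 * (a * b * (1 - Real.cos th)) := by
    linear_combination hlaw
  have e2 : 2 / 5 * (a * b * th ^ 2) ≤ 2 * (a * b * (1 - Real.cos th)) := by
    have := mul_le_mul_of_nonneg_left hjord hab
    linarith [this]
  have hBC2SB : (s - P + Q) * (s + P - Q) ≤ (s - P + Q) * (2 * S) :=
    mul_le_mul_of_nonneg_left hC2S hB0
  have hSs : (S - s) * (S + s) = 1 := by linear_combination hSq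
  have h1le : 1 ≤ 2 * S * (S - s) := by linarith [hSs, sq_nonneg (S - s)]
  have hmain : 1 + M ^ 2 / (2 * K ^ 2) * ((a - b) ^ 2 / (J1 * J2))
      + 2 / 5 * (a * b * th ^ 2) ≤ 2 * S * (S - P + Q) := by
    linarith [h1le, hBC2SB, e1, e2, hKey2]
  have hA0 : 0 ≤ S - P + Q := by linarith
  refine ⟨hA0, ?_⟩
  -- constants
  have hc1 : cst M ≤ M ^ 2 / (4 * K ^ 2) := by
    rw [hK]
    unfold cst
    exact le_trans (min_le_left _ _) (min_le_right _ _)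
  have hc2 : cst M ≤ 1 / 5 := by
    unfold cst
    exact le_trans (min_le_right _ _) (min_le_left _ _)
  have hc0 : 0 ≤ cst M := le_of_lt (cst_pos hM)
  have ht1 : 0 ≤ (a - b) ^ 2 / (J1 * J2) := by positivity
  have ht2 : 0 ≤ a * b * th ^ 2 := by positivity
  rw [div_mul_eq_mul_div, div_le_iff₀ hS0]
  have hcc : 2 * cst M ≤ M ^ 2 / (2 * K ^ 2) := by
    have h4 : M ^ 2 / (2 * K ^ 2) = 2 * (M ^ 2 / (4 * K ^ 2)) := by
      field_simp; ring
    rw [h4]; linarith [hc1]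
  linarith [hmain, hc2, mul_nonneg (sub_nonneg.2 hcc) ht1,
    mul_nonneg (by linarith : (0:ℝ) ≤ 2 / 5 - 2 * cst M) ht2]

set_option maxHeartbeats 1000000 in
/-- Core real-variable estimate for parts (c), (d). -/
lemma core_d (M a b s ph P Q J1 J2 S : ℝ)
    (hM : 0 < M)
    (ha : 0 ≤ a) (hb : 0 ≤ b) (hs : 0 ≤ s)
    (hP : P ^ 2 = M ^ 2 + a ^ 2) (hQ : Q ^ 2 = M ^ 2 + b ^ 2)
    (hJ1 : J1 ^ 2 = 1 + a ^ 2) (hJ2 : J2 ^ 2 = 1 + b ^ 2) (hSq : S ^ 2 = 1 + s ^ 2)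
    (hP0 : 0 < P) (hQ0 : 0 < Q) (hJ10 : 0 < J1) (hJ20 : 0 < J2) (hS1 : 1 ≤ S)
    (hph0 : 0 ≤ ph) (hphpi : ph ≤ Real.pi)
    (hlaw : a ^ 2 = s ^ 2 + b ^ 2 + 2 * (s * b * Real.cos ph)) :
    0 ≤ S - P + Q ∧
    cst M * (s * b * ph ^ 2) / (J1 + J2) ≤ S - P + Q := by
  set K : ℝ := max 1 M with hK
  have hK1 : 1 ≤ K := le_max_left _ _
  have hMK : M ≤ K := le_max_right _ _
  have hK0 : 0 < K := lt_of_lt_of_le one_pos hK1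
  have hK2 : 1 ≤ K ^ 2 := by
    have := mul_le_mul hK1 hK1 zero_le_one (by linarith : (0:ℝ) ≤ K)
    nlinarith [this]
  have hM2K : M ^ 2 ≤ K ^ 2 := by
    have := mul_self_le_mul_self (le_of_lt hM) hMK
    nlinarith [this]
  have hS0 : 0 < S := lt_of_lt_of_le one_pos hS1
  have hco1 : Real.cos ph ≤ 1 := Real.cos_le_one ph
  have hcon : -1 ≤ Real.cos ph := Real.neg_one_le_cos ph
  have hjord : ph ^ 2 / 5 ≤ 1 - Real.cos ph := jordan hph0 hphpi
  have hsb : 0 ≤ s * b := mul_nonneg hs hb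
  have hsS : s ≤ S := le_of_sq hs (by linarith) (by linarith [hSq])
  have hbQ : b ≤ Q := le_of_sq hb (le_of_lt hQ0) (by linarith [hQ, sq_nonneg M])
  have haJ1 : a ≤ J1 := le_of_sq ha (le_of_lt hJ10) (by linarith [hJ1])
  have hbJ2 : b ≤ J2 := le_of_sq hb (le_of_lt hJ20) (by linarith [hJ2])
  have h1J1 : 1 ≤ J1 := le_of_sq zero_le_one (le_of_lt hJ10) (by linarith [hJ1, sq_nonneg a])
  have h1J2 : 1 ≤ J2 := le_of_sq zero_le_one (le_of_lt hJ20) (by linarith [hJ2, sq_nonneg b])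
  -- s ≤ a + b
  have hsab : s ≤ a + b := by
    apply sum_bound ha hb hs
    linarith [hlaw, mul_nonneg hsb (by linarith : (0:ℝ) ≤ 1 + Real.cos ph)]
  -- P ≤ Q + S
  have hPle : P ≤ Q + S := by
    have h1 : P ^ 2 ≤ (Q + s) ^ 2 := by
      have h2 := mul_nonneg hsb (by linarith : (0:ℝ) ≤ 1 - Real.cos ph)
      have h3 := mul_nonneg (sub_nonneg.2 hbQ) hs
      linarith [h2, h3, hP, hQ, hlaw]
    have h4 : P ≤ Q + s := le_of_sq (le_of_lt hP0) (by linarith) h1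
    linarith
  have hA0 : 0 ≤ S - P + Q := by linarith
  refine ⟨hA0, ?_⟩
  -- S ≤ J1 + J2
  have hSJ : S ≤ J1 + J2 := by
    apply le_of_sq (le_of_lt hS0) (by linarith)
    have h5 : a * b ≤ J1 * J2 := mul_le_mul haJ1 hbJ2 hb (le_of_lt hJ10)
    have h6 := mul_self_le_mul_self hs hsab
    linarith [h5, h6, hSq, hJ1, hJ2]
  have hPK : P ≤ K * J1 := by
    apply le_of_sq (le_of_lt hP0) (by positivity)
    have h1 : (K * J1) ^ 2 = K ^ 2 * (1 + a ^ 2) := by rw [mul_pow, hJ1]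
    have h2 := mul_le_mul_of_nonneg_right hK2 (sq_nonneg a)
    linarith [h1, h2, hM2K, hP]
  have hQK : Q ≤ K * J2 := by
    apply le_of_sq (le_of_lt hQ0) (by positivity)
    have h1 : (K * J2) ^ 2 = K ^ 2 * (1 + b ^ 2) := by rw [mul_pow, hJ2]
    have h2 := mul_le_mul_of_nonneg_right hK2 (sq_nonneg b)
    linarith [h1, h2, hM2K, hQ]
  have hD : S + P + Q ≤ (1 + K) * (J1 + J2) := by
    have h9 : (1 + K) * (J1 + J2) = (J1 + J2) + (K * J1 + K * J2) := by ring
    linarith [hPK, hQK, hSJ, h9]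
  -- A * D ≥ (2/5) s b ph²
  have hAD : (S - P + Q) * (S + P + Q) = 1 + 2 * (S * Q - s * b * Real.cos ph) := by
    linear_combination hSq + hQ - hP - hlaw
  have hSQ : s * b ≤ S * Q := by
    calc s * b ≤ S * b := mul_le_mul_of_nonneg_right hsS hb
      _ ≤ S * Q := mul_le_mul_of_nonneg_left hbQ (le_of_lt hS0)
  have h2 : 2 / 5 * (s * b * ph ^ 2) ≤ (S - P + Q) * (S + P + Q) := by
    have h7 := mul_le_mul_of_nonneg_left hjord hsb
    linarith [hAD, hSQ, h7]
  have h1 : (S - P + Q) * (S + P + Q) ≤ (S - P + Q) * ((1 + K) * (J1 + J2)) :=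
    mul_le_mul_of_nonneg_left hD hA0
  have hT : 0 ≤ s * b * ph ^ 2 := by positivity
  have hck : cst M * (1 + K) ≤ 2 / 5 := by
    have hc3 : cst M ≤ 2 / (5 * (1 + K)) := by
      rw [hK]
      unfold cst
      exact le_trans (min_le_right _ _) (min_le_right _ _)
    have h4 : 0 < 1 + K := by linarith
    rw [← le_div_iff₀ h4]
    calc cst M ≤ 2 / (5 * (1 + K)) := hc3
      _ = 2 / 5 / (1 + K) := by rw [div_div]
  have hJJ0 : 0 < J1 + J2 := by linarith
  rw [div_le_iff₀ hJJ0]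
  have hckT := mul_le_mul_of_nonneg_right hck hT
  have hfin : (1 + K) * (cst M * (s * b * ph ^ 2)) ≤ (1 + K) * ((S - P + Q) * (J1 + J2)) := by
    have h9 : (1 + K) * (cst M * (s * b * ph ^ 2)) = cst M * (1 + K) * (s * b * ph ^ 2) := by ring
    linarith [h1, h2, hckT, h9]
  exact le_of_mul_le_mul_left hfin (by linarith)

-- basic facts about hnorm/jap
lemma hnorm_sq (m : ℝ) (ζ : Euc3) : hnorm m ζ ^ 2 = m ^ 2 + ‖ζ‖ ^ 2 :=
  Real.sq_sqrt (by positivity)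

lemma hnorm_pos {m : ℝ} (hm : 0 < m) (ζ : Euc3) : 0 < hnorm m ζ :=
  Real.sqrt_pos.2 (by positivity)

lemma jap_sq (ζ : Euc3) : jap ζ ^ 2 = 1 + ‖ζ‖ ^ 2 := by
  have := hnorm_sq 1 ζ; simpa [jap] using this

lemma one_le_jap (ζ : Euc3) : 1 ≤ jap ζ := by
  have h := jap_sq ζ
  have h0 : 0 ≤ jap ζ := Real.sqrt_nonneg _
  nlinarith [sq_nonneg ‖ζ‖]

lemma jap_pos (ζ : Euc3) : 0 < jap ζ := lt_of_lt_of_le one_pos (one_le_jap ζ)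

lemma min_jap_le_hnorm {M : ℝ} (hM : 0 < M) (ζ : Euc3) :
    min 1 M * jap ζ ≤ hnorm M ζ := by
  have h1 : 0 ≤ min 1 M := le_min (by norm_num) (le_of_lt hM)
  have key : (min 1 M * jap ζ) ^ 2 ≤ hnorm M ζ ^ 2 := by
    rw [mul_pow, jap_sq, hnorm_sq]
    have h2 : min 1 M ≤ 1 := min_le_left _ _
    have h3 : min 1 M ≤ M := min_le_right _ _
    nlinarith [sq_nonneg ‖ζ‖, mul_le_mul h3 h3 h1 (le_of_lt hM),
      mul_le_mul h2 h2 h1 zero_le_one, mul_nonneg h1 h1]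
  exact le_of_sq (mul_nonneg h1 (le_of_lt (jap_pos ζ))) (Real.sqrt_nonneg _) key

end Stmt18Aux

open Stmt18Aux InnerProductGeometry in
set_option maxHeartbeats 2000000 in
/-- **Lemma 8.1 (i): nonresonant modulation bounds.** -/
theorem stmt18 (M : ℝ) (hM : 0 < M) :
    ∃ c : ℝ, 0 < c ∧ ∀ ξ η : Euc3,
      (c * (jap ξ + jap η) ≤ modFn M (-1) 1 ξ η) ∧
      (ξ ≠ 0 → η ≠ 0 →
        (c / jap (ξ - η)) *
            ((‖ξ‖ - ‖η‖) ^ 2 / (jap ξ * jap η)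
              + ‖ξ‖ * ‖η‖ * InnerProductGeometry.angle ξ η ^ 2 + 1)
          ≤ modFn M 1 1 ξ η ∧
        (c / jap (ξ - η)) *
            ((‖ξ‖ - ‖η‖) ^ 2 / (jap ξ * jap η)
              + ‖ξ‖ * ‖η‖ * InnerProductGeometry.angle ξ η ^ 2 + 1)
          ≤ modFn M (-1) (-1) ξ η) ∧
      (ξ ≠ 0 → ξ ≠ η →
        c * (‖ξ - η‖ * ‖ξ‖ * InnerProductGeometry.angle (ξ - η) (-ξ) ^ 2) / (jap ξ + jap η)
          ≤ modFn M (-1) (-1) ξ η) ∧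
      (η ≠ 0 → ξ ≠ η →
        c * (‖ξ - η‖ * ‖η‖ * InnerProductGeometry.angle (ξ - η) η ^ 2) / (jap ξ + jap η)
          ≤ modFn M 1 1 ξ η) := by
  refine ⟨cst M, cst_pos hM, fun ξ η => ?_⟩
  set a := ‖ξ‖ with haa
  set b := ‖η‖ with hbb
  set s := ‖ξ - η‖ with hss
  set P := hnorm M ξ with hPP
  set Q := hnorm M η with hQQ
  set J1 := jap ξ with hJ1J
  set J2 := jap η with hJ2J
  set S := jap (ξ - η) with hSS
  have ha : 0 ≤ a := norm_nonneg _
  have hb : 0 ≤ b := norm_nonneg _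
  have hs : 0 ≤ s := norm_nonneg _
  have hP : P ^ 2 = M ^ 2 + a ^ 2 := hnorm_sq M ξ
  have hQ : Q ^ 2 = M ^ 2 + b ^ 2 := hnorm_sq M η
  have hJ1 : J1 ^ 2 = 1 + a ^ 2 := jap_sq ξ
  have hJ2 : J2 ^ 2 = 1 + b ^ 2 := jap_sq η
  have hSq : S ^ 2 = 1 + s ^ 2 := jap_sq (ξ - η)
  have hP0 : 0 < P := hnorm_pos hM ξ
  have hQ0 : 0 < Q := hnorm_pos hM η
  have hJ10 : 0 < J1 := jap_pos ξ
  have hJ20 : 0 < J2 := jap_pos η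
  have hS1 : 1 ≤ S := one_le_jap (ξ - η)
  refine ⟨?_, fun _ _ => ?_, fun _ _ => ?_, fun _ _ => ?_⟩
  · -- (a)
    have hmin : 0 < min 1 M := lt_min one_pos hM
    have h1 : min 1 M * J1 ≤ P := min_jap_le_hnorm hM ξ
    have h2 : min 1 M * J2 ≤ Q := min_jap_le_hnorm hM η
    have hc : cst M ≤ min 1 M := by
      unfold cst
      exact le_trans (min_le_left _ _) (min_le_left _ _)
    have habs : modFn M (-1) 1 ξ η = S + P + Q := by
      have he : jap (ξ - η) - (-1) * hnorm M ξ + 1 * hnorm M η = S + P + Q := by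
        rw [← hPP, ← hQQ, ← hSS]; ring
      rw [modFn, he, abs_of_nonneg (by linarith : (0:ℝ) ≤ S + P + Q)]
    rw [habs]
    have hcc0 : 0 ≤ cst M := le_of_lt (cst_pos hM)
    nlinarith [mul_le_mul_of_nonneg_right hc (by linarith : (0:ℝ) ≤ J1 + J2)]
  · -- (b)
    set th := angle ξ η with hth
    have hth0 : 0 ≤ th := angle_nonneg ξ η
    have hthpi : th ≤ Real.pi := angle_le_pi ξ η
    have hlaw : s ^ 2 = a ^ 2 + b ^ 2 - 2 * (a * b * Real.cos th) := by
      rw [hss, haa, hbb, norm_sub_sq_real, hth, ← cos_angle_mul_norm_mul_norm]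
      ring
    constructor
    · -- ++ sign : |S - P + Q|
      obtain ⟨h0, hineq⟩ := core_b M a b s th P Q J1 J2 S hM ha hb hs hP hQ hJ1 hJ2 hSq
        hP0 hQ0 hJ10 hJ20 hS1 hth0 hthpi hlaw
      have habs : modFn M 1 1 ξ η = S - P + Q := by
        rw [modFn, one_mul, one_mul, abs_of_nonneg (by linarith)]
      rw [habs]; exact hineq
    · -- -- sign : |S + P - Q|, apply core_b with roles swapped
      have hlaw' : s ^ 2 = b ^ 2 + a ^ 2 - 2 * (b * a * Real.cos th) := by
        rw [hlaw]; ring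
      obtain ⟨h0, hineq⟩ := core_b M b a s th Q P J2 J1 S hM hb ha hs hQ hP hJ2 hJ1 hSq
        hQ0 hP0 hJ20 hJ10 hS1 hth0 hthpi hlaw'
      have habs : modFn M (-1) (-1) ξ η = S - Q + P := by
        rw [modFn, neg_mul, neg_mul, one_mul, one_mul, sub_neg_eq_add]
        rw [show S + P + -Q = S - Q + P by ring, abs_of_nonneg (by linarith)]
      rw [habs]
      have heq : (b - a) ^ 2 / (J2 * J1) + b * a * th ^ 2 + 1
          = (a - b) ^ 2 / (J1 * J2) + a * b * th ^ 2 + 1 := by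
        rw [mul_comm J2 J1, mul_comm b a, show (b - a) ^ 2 = (a - b) ^ 2 by ring]
      rw [heq] at hineq
      exact hineq
  · -- (c) : |S + P - Q| ≥ c s a φ² / (J1 + J2)
    set ph := angle (ξ - η) (-ξ) with hph
    have hph0 : 0 ≤ ph := angle_nonneg _ _
    have hphpi : ph ≤ Real.pi := angle_le_pi _ _
    have hlaw : b ^ 2 = s ^ 2 + a ^ 2 + 2 * (s * a * Real.cos ph) := by
      have h1 : ‖η‖ ^ 2 = ‖(ξ - η) - ξ‖ ^ 2 := by
        rw [show (ξ - η) - ξ = -η by abel, norm_neg]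
      have h2 := norm_sub_sq_real (ξ - η) ξ
      have h3 := cos_angle_mul_norm_mul_norm (ξ - η) (-ξ)
      rw [norm_neg, inner_neg_right] at h3
      rw [← hbb] at h1
      rw [← haa, ← hss] at h2
      rw [← haa, ← hss, ← hph] at h3
      rw [h1, h2]
      linarith [h3]
    obtain ⟨h0, hineq⟩ := core_d M b a s ph Q P J2 J1 S hM hb ha hs hQ hP hJ2 hJ1 hSq
      hQ0 hP0 hJ20 hJ10 hS1 hph0 hphpi hlaw
    have habs : modFn M (-1) (-1) ξ η = S - Q + P := by
      rw [modFn, neg_mul, neg_mul, one_mul, one_mul, sub_neg_eq_add]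
      rw [show S + P + -Q = S - Q + P by ring, abs_of_nonneg (by linarith)]
    rw [habs]
    calc cst M * (s * a * ph ^ 2) / (J1 + J2)
        = cst M * (s * a * ph ^ 2) / (J2 + J1) := by rw [add_comm J1 J2]
      _ ≤ S - Q + P := hineq
  · -- (d)
    set ph := angle (ξ - η) η with hph
    have hph0 : 0 ≤ ph := angle_nonneg _ _
    have hphpi : ph ≤ Real.pi := angle_le_pi _ _
    have hlaw : a ^ 2 = s ^ 2 + b ^ 2 + 2 * (s * b * Real.cos ph) := by
      have h1 : ‖ξ‖ ^ 2 = ‖(ξ - η) + η‖ ^ 2 := by rw [sub_add_cancel]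
      have h2 := norm_add_sq_real (ξ - η) η
      have h3 := cos_angle_mul_norm_mul_norm (ξ - η) η
      rw [← haa] at h1
      rw [← hbb, ← hss] at h2
      rw [← hbb, ← hss, ← hph] at h3
      rw [h1, h2]
      linarith [h3]
    obtain ⟨h0, hineq⟩ := core_d M a b s ph P Q J1 J2 S hM ha hb hs hP hQ hJ1 hJ2 hSq
      hP0 hQ0 hJ10 hJ20 hS1 hph0 hphpi hlaw
    have habs : modFn M 1 1 ξ η = S - P + Q := by
      rw [modFn, one_mul, one_mul, abs_of_nonneg (by linarith)]
    rw [habs]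
    exact hineq
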